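/- arXiv:2407.18019 — 3 statements merged into one kernel-verified Lean document; each statement's English description precedes it below -/
import Mathlib

section
/- The Jucys–Murphy elements of the group algebra ℂ[S_n], defined by j_1 = 0 and j_k = Σ_{i=1}^{k−1} (i k) for 2 ≤ k ≤ n, commute pairwise: j_k j_l = j_l j_k for all k, l. -/
open Finset Equiv

/-- A transposition of two points below `l` commutes with the `l`-th Jucys–Murphy element. -/
lemma swap_comm_jucysMurphy (n : ℕ) (l i k : Fin n) (hi : i < l) (hk : k < l) :
    (MonoidAlgebra.of ℂ (Equiv.Perm (Fin n)) (Equiv.swap i k)) *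
      (∑ j ∈ Finset.filter (fun j : Fin n => j < l) Finset.univ,
        MonoidAlgebra.of ℂ (Equiv.Perm (Fin n)) (Equiv.swap j l)) =
    (∑ j ∈ Finset.filter (fun j : Fin n => j < l) Finset.univ,
        MonoidAlgebra.of ℂ (Equiv.Perm (Fin n)) (Equiv.swap j l)) *
      (MonoidAlgebra.of ℂ (Equiv.Perm (Fin n)) (Equiv.swap i k)) := by
  set σ := Equiv.swap i k with hσ
  have hσl : σ l = l := Equiv.swap_apply_of_ne_of_ne hi.ne' hk.ne'
  have hmaps : ∀ j : Fin n, j < l → σ j < l := by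
    intro j hj
    rcases eq_or_ne j i with rfl | hji
    · rw [hσ, Equiv.swap_apply_left]; exact hk
    rcases eq_or_ne j k with rfl | hjk
    · rw [hσ, Equiv.swap_apply_right]; exact hi
    · rw [hσ, Equiv.swap_apply_of_ne_of_ne hji hjk]; exact hj
  rw [Finset.mul_sum, Finset.sum_mul]
  have key : ∀ j : Fin n,
      (MonoidAlgebra.of ℂ (Equiv.Perm (Fin n)) σ) *
        MonoidAlgebra.of ℂ (Equiv.Perm (Fin n)) (Equiv.swap j l) =
      MonoidAlgebra.of ℂ (Equiv.Perm (Fin n)) (Equiv.swap (σ j) l) *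
        MonoidAlgebra.of ℂ (Equiv.Perm (Fin n)) σ := by
    intro j
    rw [← map_mul, ← map_mul, Equiv.mul_swap_eq_swap_mul, hσl]
  simp_rw [key]
  refine Finset.sum_nbij' (fun j => σ j) (fun j => σ j) ?_ ?_ ?_ ?_ ?_
  · intro j hj
    simp only [Finset.mem_filter, Finset.mem_univ, true_and] at hj ⊢
    exact hmaps j hj
  · intro j hj
    simp only [Finset.mem_filter, Finset.mem_univ, true_and] at hj ⊢
    exact hmaps j hj
  · intro j _; simp [hσ, Equiv.swap_apply_self]
  · intro j _; simp [hσ, Equiv.swap_apply_self]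
  · intro j _; simp [hσ, Equiv.swap_apply_self]

lemma jucysMurphy_comm_aux (n : ℕ) (J : Fin n → MonoidAlgebra ℂ (Equiv.Perm (Fin n)))
    (hJ : ∀ k : Fin n, J k = ∑ i ∈ Finset.filter (fun i : Fin n => i < k) Finset.univ,
        MonoidAlgebra.of ℂ (Equiv.Perm (Fin n)) (Equiv.swap i k))
    (k l : Fin n) (hkl : k < l) : J k * J l = J l * J k := by
  rw [hJ k, Finset.sum_mul, Finset.mul_sum]
  refine Finset.sum_congr rfl fun i hi => ?_
  simp only [Finset.mem_filter, Finset.mem_univ, true_and] at hi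
  rw [hJ l]
  exact swap_comm_jucysMurphy n l i k (hi.trans hkl) hkl

/-- The Jucys–Murphy elements `j_k = Σ_{i < k} (i k)` of the group algebra `ℂ[S_n]`
(in particular `j` of the smallest index is the empty sum `0`) commute pairwise. -/
theorem jucysMurphy_commute (n : ℕ) (J : Fin n → MonoidAlgebra ℂ (Equiv.Perm (Fin n)))
    (hJ : ∀ k : Fin n, J k = ∑ i ∈ Finset.filter (fun i : Fin n => i < k) Finset.univ,
        MonoidAlgebra.of ℂ (Equiv.Perm (Fin n)) (Equiv.swap i k)) :
    ∀ k l : Fin n, J k * J l = J l * J k := by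
  intro k l
  rcases lt_trichotomy k l with h | rfl | h
  · exact jucysMurphy_comm_aux n J hJ k l h
  · rfl
  · exact (jucysMurphy_comm_aux n J hJ l k h).symm
end

section
/- Let V be a vector space of dimension d ≥ 2 over a field of characteristic 0, and let Λ : V × V → V be a bilinear map such that for all u, v, w ∈ V the element Λ(u,w) ⊗ v + Λ(u,v) ⊗ w of V ⊗ V is symmetric, i.e., Λ(u,w) ⊗ v + Λ(u,v) ⊗ w = v ⊗ Λ(u,w) + w ⊗ Λ(u,v). Then there exists a linear functional ξ ∈ V* such that Λ(u,v) = ξ(u)·v for all u, v ∈ V (explicitly, ξ(u) = (1/d)·tr(v ↦ Λ(u,v))). -/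
open scoped TensorProduct

/-! Putting `v = w` in the hypothesis gives `Λ(u,v) ⊗ v = v ⊗ Λ(u,v)`, which forces `Λ(u,v)` and
`v` to be collinear, since `x ⊗ y` and `y ⊗ x` are distinct members of a basis of `V ⊗ V`
whenever `x, y` are linearly independent. An endomorphism for which every vector is an
eigenvector is a homothety, so `Λ u = ξ(u) • id`, and taking traces identifies `ξ`. -/

theorem TensorProduct.tmul_ne_tmul_swap_of_linearIndependent {R M : Type*} [CommRing R]
    [IsDomain R] [AddCommGroup M] [Module R M] {x y : M} (h : LinearIndependent R ![x, y]) :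
    x ⊗ₜ[R] y ≠ y ⊗ₜ[R] x := by
  simpa using (h.tmul_of_isDomain h).injective.ne (a₁ := (0, 1)) (a₂ := (1, 0)) (by decide)

theorem LinearMap.exists_eq_smul_id_of_forall_tmul_comm {R M : Type*} [CommRing R] [IsDomain R]
    [AddCommGroup M] [Module R M] [Module.Free R M] (f : M →ₗ[R] M)
    (hf : ∀ v, f v ⊗ₜ[R] v = v ⊗ₜ[R] f v) : ∃ a : R, f = a • 1 :=
  exists_eq_smul_id_of_forall_notLinearIndependent fun v h =>
    TensorProduct.tmul_ne_tmul_swap_of_linearIndependent h (hf v).symm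

theorem asymmetric_projective_difference_tensor_general (K : Type*) [Field K] [CharZero K]
    (V : Type*) [AddCommGroup V] [Module K V] [FiniteDimensional K V]
    (d : ℕ) (hdim : Module.finrank K V = d)
    (Λ : V →ₗ[K] V →ₗ[K] V)
    (hΛ : ∀ u v w : V,
      Λ u w ⊗ₜ[K] v + Λ u v ⊗ₜ[K] w = v ⊗ₜ[K] Λ u w + w ⊗ₜ[K] Λ u v) :
    ∃ ξ : V →ₗ[K] K, (∀ u v : V, Λ u v = ξ u • v) ∧
      ∀ u : V, ξ u = (d : K)⁻¹ * LinearMap.trace K V (Λ u) := by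
  refine ⟨(d : K)⁻¹ • (LinearMap.trace K V ∘ₗ Λ), fun u v => ?_, fun u => rfl⟩
  have hcomm : ∀ v, Λ u v ⊗ₜ[K] v = v ⊗ₜ[K] Λ u v := fun v => by
    have h := hΛ u v v
    rw [← two_smul K, ← two_smul K (v ⊗ₜ[K] _)] at h
    exact smul_right_injective _ two_ne_zero h
  obtain ⟨c, hc⟩ := (Λ u).exists_eq_smul_id_of_forall_tmul_comm hcomm
  rcases eq_or_ne d 0 with rfl | hd0
  · have := Module.finrank_zero_iff.mp hdim
    exact Subsingleton.elim _ _
  · simp [hc, hdim, mul_comm c, inv_mul_cancel_left₀ (Nat.cast_ne_zero.mpr hd0 : (d : K) ≠ 0)]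

/-- Let `V` have dimension `d ≥ 2` over a field of characteristic zero, and let
`Λ : V × V → V` be bilinear such that `Λ(u,w) ⊗ v + Λ(u,v) ⊗ w` is a symmetric element of
`V ⊗ V` for all `u, v, w`.  Then `Λ(u,v) = ξ(u)·v` for a linear functional `ξ`, explicitly
`ξ(u) = (1/d)·tr(v ↦ Λ(u,v))`. -/
theorem asymmetric_projective_difference_tensor (K : Type*) [Field K] [CharZero K]
    (V : Type*) [AddCommGroup V] [Module K V] [FiniteDimensional K V]
    (d : ℕ) (hd : 2 ≤ d) (hdim : Module.finrank K V = d)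
    (Λ : V →ₗ[K] V →ₗ[K] V)
    (hΛ : ∀ u v w : V,
      Λ u w ⊗ₜ[K] v + Λ u v ⊗ₜ[K] w = v ⊗ₜ[K] Λ u w + w ⊗ₜ[K] Λ u v) :
    ∃ ξ : V →ₗ[K] K, (∀ u v : V, Λ u v = ξ u • v) ∧
      ∀ u : V, ξ u = (d : K)⁻¹ * LinearMap.trace K V (Λ u) :=
  asymmetric_projective_difference_tensor_general K V d hdim Λ hΛ
end

section
/- Let V be a vector space of dimension d ≥ 2 over a field of characteristic 0, and let Λ : V × V → V be a symmetric bilinear map such that for all u, v, w ∈ V the element Λ(u,v) ⊗ w + Λ(v,w) ⊗ u + Λ(w,u) ⊗ v of V ⊗ V is symmetric under the swap of tensor factors. Then there exists ξ ∈ V* with Λ(u,v) = ξ(u)·v + ξ(v)·u for all u, v (explicitly, ξ(u) = (1/(d+1))·tr(v ↦ Λ(u,v))). -/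
/-!
Contract the swap-symmetry identity with a functional `ψ` on the first tensor factor. Read as
an identity between endomorphisms in `w`, its trace gives
`(d + 1) ψ(Λ(u,v)) = ψ(u) tr Λ(v,·) + ψ(v) tr Λ(u,·)`, the `d` coming from `tr(id)`. Since
functionals separate points, `(d + 1) Λ(u,v) = tr Λ(v,·) • u + tr Λ(u,·) • v`.
-/

theorem Module.Dual.smul_add_smul_add_smul_eq_of_tmul_eq {R V : Type*} [CommRing R]
    [AddCommGroup V] [Module R V] (ψ : Module.Dual R V) {a b c x y z : V}
    (h : a ⊗ₜ[R] x + b ⊗ₜ[R] y + c ⊗ₜ[R] z = x ⊗ₜ[R] a + y ⊗ₜ[R] b + z ⊗ₜ[R] c) :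
    ψ a • x + ψ b • y + ψ c • z = ψ x • a + ψ y • b + ψ z • c := by
  simpa using congrArg ((TensorProduct.lid R V).toLinearMap ∘ₗ TensorProduct.map ψ LinearMap.id) h

section

variable {R V : Type*} [CommRing R] [AddCommGroup V] [Module R V]
  [Module.Free R V] [Module.Finite R V]

theorem finrank_add_one_mul_dual_apply_eq (Λ : V →ₗ[R] V →ₗ[R] V)
    (hΛsymm : ∀ u v : V, Λ u v = Λ v u)
    (hΛ : ∀ u v w : V,
      Λ u v ⊗ₜ[R] w + Λ v w ⊗ₜ[R] u + Λ w u ⊗ₜ[R] v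
        = w ⊗ₜ[R] Λ u v + u ⊗ₜ[R] Λ v w + v ⊗ₜ[R] Λ w u)
    (ψ : Module.Dual R V) (u v : V) :
    ((Module.finrank R V : R) + 1) * ψ (Λ u v)
      = ψ u * LinearMap.trace R V (Λ v) + ψ v * LinearMap.trace R V (Λ u) := by
  have hmaps : ψ (Λ u v) • LinearMap.id + (ψ ∘ₗ Λ v).smulRight u + (ψ ∘ₗ Λ u).smulRight v
      = ψ.smulRight (Λ u v) + ψ u • Λ v + ψ v • Λ u := by
    ext w
    simpa [hΛsymm w u] using ψ.smul_add_smul_add_smul_eq_of_tmul_eq (hΛ u v w)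
  have htrace := congrArg (LinearMap.trace R V) hmaps
  simp only [map_add, map_smul, LinearMap.trace_id, LinearMap.trace_smulRight,
    LinearMap.comp_apply, smul_eq_mul, hΛsymm v u] at htrace
  linear_combination htrace

theorem finrank_add_one_smul_eq (Λ : V →ₗ[R] V →ₗ[R] V)
    (hΛsymm : ∀ u v : V, Λ u v = Λ v u)
    (hΛ : ∀ u v w : V,
      Λ u v ⊗ₜ[R] w + Λ v w ⊗ₜ[R] u + Λ w u ⊗ₜ[R] v
        = w ⊗ₜ[R] Λ u v + u ⊗ₜ[R] Λ v w + v ⊗ₜ[R] Λ w u)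
    (u v : V) :
    ((Module.finrank R V : R) + 1) • Λ u v
      = LinearMap.trace R V (Λ v) • u + LinearMap.trace R V (Λ u) • v := by
  rw [← sub_eq_zero, ← Module.forall_dual_apply_eq_zero_iff R]
  intro ψ
  simp only [map_sub, map_add, map_smul, smul_eq_mul]
  linear_combination finrank_add_one_mul_dual_apply_eq Λ hΛsymm hΛ ψ u v

end

theorem symmetric_projective_difference_tensor_general (K : Type*) [Field K] [CharZero K]
    (V : Type*) [AddCommGroup V] [Module K V] [FiniteDimensional K V]
    (d : ℕ) (hdim : Module.finrank K V = d)
    (Λ : V →ₗ[K] V →ₗ[K] V)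
    (hΛsymm : ∀ u v : V, Λ u v = Λ v u)
    (hΛ : ∀ u v w : V,
      Λ u v ⊗ₜ[K] w + Λ v w ⊗ₜ[K] u + Λ w u ⊗ₜ[K] v
        = w ⊗ₜ[K] Λ u v + u ⊗ₜ[K] Λ v w + v ⊗ₜ[K] Λ w u) :
    ∃ ξ : V →ₗ[K] K, (∀ u v : V, Λ u v = ξ u • v + ξ v • u) ∧
      ∀ u : V, ξ u = ((d : K) + 1)⁻¹ * LinearMap.trace K V (Λ u) := by
  have hd : (d : K) + 1 ≠ 0 := by exact_mod_cast d.succ_ne_zero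
  refine ⟨((d : K) + 1)⁻¹ • (LinearMap.trace K V ∘ₗ Λ), fun u v => ?_, fun u => rfl⟩
  have hkey := finrank_add_one_smul_eq Λ hΛsymm hΛ u v
  rw [hdim] at hkey
  rw [← inv_smul_smul₀ hd (Λ u v), hkey, smul_add, add_comm]
  simp [smul_smul]

/-- Let `V` have dimension `d ≥ 2` over a field of characteristic zero, and let
`Λ : V × V → V` be a symmetric bilinear map such that
`Λ(u,v) ⊗ w + Λ(v,w) ⊗ u + Λ(w,u) ⊗ v` is symmetric under the swap of tensor factors for
all `u, v, w`.  Then `Λ(u,v) = ξ(u)·v + ξ(v)·u` for a linear functional `ξ`, explicitly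
`ξ(u) = (1/(d+1))·tr(v ↦ Λ(u,v))`. -/
theorem symmetric_projective_difference_tensor (K : Type*) [Field K] [CharZero K]
    (V : Type*) [AddCommGroup V] [Module K V] [FiniteDimensional K V]
    (d : ℕ) (hd : 2 ≤ d) (hdim : Module.finrank K V = d)
    (Λ : V →ₗ[K] V →ₗ[K] V)
    (hΛsymm : ∀ u v : V, Λ u v = Λ v u)
    (hΛ : ∀ u v w : V,
      Λ u v ⊗ₜ[K] w + Λ v w ⊗ₜ[K] u + Λ w u ⊗ₜ[K] v
        = w ⊗ₜ[K] Λ u v + u ⊗ₜ[K] Λ v w + v ⊗ₜ[K] Λ w u) :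
    ∃ ξ : V →ₗ[K] K, (∀ u v : V, Λ u v = ξ u • v + ξ v • u) ∧
      ∀ u : V, ξ u = ((d : K) + 1)⁻¹ * LinearMap.trace K V (Λ u) :=
  symmetric_projective_difference_tensor_general K V d hdim Λ hΛsymm hΛ
end
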